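/- Let 𝓜 = {A^{(1)},…,A^{(N)}} with A^{(k)} = I + S^{(k)} as above, and Ĥ^{(N)} = A^{(1)}⋯A^{(N)}. Then the generalized spectral radius of 𝓜 equals ρ(Ĥ^{(N)})^{1/N}; i.e., the ordered product A^{(1)}⋯A^{(N)} realizes the generalized spectral radius of the family. -/

import Mathlib

open Matrix BigOperators Filter

/-- The spectral radius of a real square matrix: supremum of moduli of complex eigenvalues. -/
noncomputable def specRad {d : ℕ} (M : Matrix (Fin d) (Fin d) ℝ) : ℝ :=
  sSup ((fun z : ℂ => ‖z‖) '' spectrum ℂ (M.map Complex.ofReal))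

/-- `rhoK A k` = max over products of `k` matrices from the family `A` of the `k`-th root
of the spectral radius of the product. -/
noncomputable def rhoK {d n : ℕ} (A : Fin n → Matrix (Fin d) (Fin d) ℝ) (k : ℕ) : ℝ :=
  ⨆ f : Fin k → Fin n, specRad ((List.ofFn fun i => A (f i)).prod) ^ ((1 : ℝ) / (k : ℝ))

/-- `Amat N k` is the matrix `I + S^(k)` (0-indexed `k`). -/
def Amat (N : ℕ) (k : ℕ) : Matrix (Fin N) (Fin N) ℝ :=
  fun i j => (if i = j then 1 else 0) + (if (i : ℕ) = k ∧ (j : ℕ) ≠ k then 2 else 0)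

/-!
Right multiplication by `A⁽ᵃ⁾` sends a row vector `c` to `pivotStep c a`, which adds `2 cₐ`
to every coordinate except the `a`-th. Along the cyclic word `0, 1, …, N-1, 0, 1, …` (whose
blocks of length `N` multiply to `Ĥ`) the current pivot is always a largest coordinate of the
row vector `𝟙ᵀ · (product so far)`, and an exchange argument shows that pivoting on a largest
coordinate dominates every other choice, up to a permutation of the coordinates. Hence a
product of `k` factors has entry sum at most that of `Ĥ ^ (k / N + 1)`, so by Gelfand's formula
for `Ĥ` the `k`-th roots of its spectral radius are asymptotically at most `ρ(Ĥ) ^ (1 / N)`.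
Conversely the powers `Ĥ ^ m` are products of length `m N` with `ρ(Ĥ) ^ m ≤ ρ(Ĥ ^ m)`.
-/

open scoped Topology ENNReal

-- The max-row-sum norm: on entrywise nonnegative matrices it is comparable to the entry sum.
attribute [local instance] Matrix.linftyOpNormedRing Matrix.linftyOpNormedAlgebra

section SpectralRadius

variable {d : ℕ}

lemma Matrix.map_ofReal_pow (M : Matrix (Fin d) (Fin d) ℝ) (m : ℕ) :
    (M ^ m).map Complex.ofReal = M.map Complex.ofReal ^ m :=
  map_pow Complex.ofRealHom.mapMatrix M m

lemma Matrix.norm_map_ofReal (M : Matrix (Fin d) (Fin d) ℝ) : ‖M.map Complex.ofReal‖ = ‖M‖ := by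
  simp [linfty_opNorm_def]

lemma specRad_nonneg (M : Matrix (Fin d) (Fin d) ℝ) : 0 ≤ specRad M :=
  Real.sSup_nonneg (by rintro _ ⟨z, -, rfl⟩; exact norm_nonneg z)

variable [NeZero d]

lemma spectralRadius_map_ofReal (M : Matrix (Fin d) (Fin d) ℝ) :
    spectralRadius ℂ (M.map Complex.ofReal) = ENNReal.ofReal (specRad M) := by
  obtain ⟨z, hz, hzr⟩ := spectrum.exists_nnnorm_eq_spectralRadius (M.map Complex.ofReal)
  have hmax : IsGreatest ((fun z : ℂ => ‖z‖) '' spectrum ℂ (M.map Complex.ofReal)) ‖z‖ := by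
    refine ⟨⟨z, hz, rfl⟩, ?_⟩
    rintro _ ⟨y, hy, rfl⟩
    have hy' : (‖y‖₊ : ℝ≥0∞) ≤ ‖z‖₊ :=
      hzr ▸ le_iSup₂ (f := fun k _ => (‖k‖₊ : ℝ≥0∞)) y hy
    exact_mod_cast hy'
  rw [specRad, hmax.csSup_eq, ← hzr, ofReal_norm, enorm_eq_nnnorm]

lemma specRad_le_norm (M : Matrix (Fin d) (Fin d) ℝ) : specRad M ≤ ‖M‖ := by
  have h := spectrum.spectralRadius_le_nnnorm (𝕜 := ℂ) (M.map Complex.ofReal)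
  rwa [spectralRadius_map_ofReal, ← enorm_eq_nnnorm, ← ofReal_norm, norm_map_ofReal,
    ENNReal.ofReal_le_ofReal_iff (norm_nonneg _)] at h

lemma specRad_pow_le (M : Matrix (Fin d) (Fin d) ℝ) (m : ℕ) :
    specRad M ^ m ≤ specRad (M ^ m) := by
  have h := spectrum.spectralRadius_pow_le' (𝕜 := ℂ) (M.map Complex.ofReal) m
  rwa [← map_ofReal_pow, spectralRadius_map_ofReal, spectralRadius_map_ofReal,
    ← ENNReal.ofReal_pow (specRad_nonneg M), ENNReal.ofReal_le_ofReal_iff (specRad_nonneg _)] at h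

lemma tendsto_norm_pow_rpow_specRad (M : Matrix (Fin d) (Fin d) ℝ) :
    Tendsto (fun m : ℕ => ‖M ^ m‖ ^ (1 / m : ℝ)) atTop (𝓝 (specRad M)) := by
  have h := spectrum.pow_norm_pow_one_div_tendsto_nhds_spectralRadius (M.map Complex.ofReal)
  simp_rw [← map_ofReal_pow, norm_map_ofReal, spectralRadius_map_ofReal] at h
  have h' := (ENNReal.tendsto_toReal ENNReal.ofReal_ne_top).comp h
  simpa [Function.comp_def, ENNReal.toReal_ofReal, specRad_nonneg, Real.rpow_nonneg] using h'

end SpectralRadius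

section EntrySum

variable {n : Type*} [Fintype n]

def entrySum (M : Matrix n n ℝ) : ℝ := ∑ i, ∑ j, M i j

lemma entrySum_eq_sum_one_vecMul (M : Matrix n n ℝ) : entrySum M = ∑ j, (1 ᵥ* M) j := by
  simp [entrySum, vecMul, dotProduct, Finset.sum_comm (γ := n)]

variable [DecidableEq n]

lemma sum_norm_le_norm (M : Matrix n n ℝ) (i : n) : ∑ j, ‖M i j‖ ≤ ‖M‖ := by
  rw [linfty_opNorm_def]
  have := NNReal.coe_le_coe.mpr
    (Finset.le_sup (f := fun i => ∑ j, ‖M i j‖₊) (Finset.mem_univ i))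
  simpa using this

lemma norm_le_entrySum {M : Matrix n n ℝ} (hM : ∀ i j, 0 ≤ M i j) : ‖M‖ ≤ entrySum M := by
  have hsum : 0 ≤ entrySum M :=
    Finset.sum_nonneg fun i _ => Finset.sum_nonneg fun j _ => hM i j
  have hrow (i : n) : ∑ j, ‖M i j‖₊ ≤ (entrySum M).toNNReal := by
    rw [← NNReal.coe_le_coe, Real.coe_toNNReal _ hsum]
    push_cast
    simp only [Real.norm_of_nonneg (hM i _)]
    exact Finset.single_le_sum (f := fun i => ∑ j, M i j)
      (fun i _ => Finset.sum_nonneg fun j _ => hM i j) (Finset.mem_univ i)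
  rw [linfty_opNorm_def, ← Real.coe_toNNReal _ hsum, NNReal.coe_le_coe]
  exact Finset.sup_le fun i _ => hrow i

lemma entrySum_le_card_mul_norm (M : Matrix n n ℝ) : entrySum M ≤ Fintype.card n * ‖M‖ := by
  calc entrySum M ≤ ∑ _i : n, ‖M‖ :=
        Finset.sum_le_sum fun i _ => (Finset.sum_le_sum fun j _ => Real.le_norm_self (M i j)).trans
          (sum_norm_le_norm M i)
    _ = Fintype.card n * ‖M‖ := by simp

end EntrySum

section Limits

lemma tendsto_div_add_one_div {N : ℕ} (hN : 0 < N) :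
    Tendsto (fun k : ℕ => ((k / N + 1 : ℕ) : ℝ) / k) atTop (𝓝 (1 / N)) := by
  have hN' : (0 : ℝ) < N := Nat.cast_pos.mpr hN
  have hupper : Tendsto (fun k : ℕ => 1 / (N : ℝ) + 1 / k) atTop (𝓝 (1 / N)) := by
    simpa using tendsto_const_nhds.add (tendsto_one_div_atTop_nhds_zero_nat (𝕜 := ℝ))
  refine tendsto_of_tendsto_of_tendsto_of_le_of_le' tendsto_const_nhds hupper ?_ ?_ <;>
    filter_upwards [eventually_gt_atTop 0] with k hk <;>
    have hk' : (0 : ℝ) < k := Nat.cast_pos.mpr hk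
  · have hlt : (k : ℝ) < N * ((k / N : ℕ) + 1) := by exact_mod_cast Nat.lt_mul_div_succ k hN
    rw [div_le_div_iff₀ hN' hk']
    push_cast
    linarith
  · have hle : (N : ℝ) * (k / N : ℕ) ≤ k := by exact_mod_cast Nat.mul_div_le k N
    rw [Nat.cast_succ, add_div]
    refine add_le_add ?_ le_rfl
    rw [div_le_div_iff₀ hk' hN']
    linarith

lemma tendsto_const_mul_div_add_one_rpow_one_div {a : ℕ → ℝ} {r C : ℝ} (ha : ∀ m, 0 ≤ a m)
    (hC : 0 < C) (h : Tendsto (fun m : ℕ => a m ^ (1 / m : ℝ)) atTop (𝓝 r)) {N : ℕ} (hN : 0 < N) :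
    Tendsto (fun k : ℕ => (C * a (k / N + 1)) ^ (1 / k : ℝ)) atTop (𝓝 (r ^ (1 / N : ℝ))) := by
  have hC' : Tendsto (fun k : ℕ => C ^ (1 / k : ℝ)) atTop (𝓝 1) := by
    simpa using tendsto_const_nhds.rpow (tendsto_one_div_atTop_nhds_zero_nat (𝕜 := ℝ))
      (Or.inl hC.ne')
  have hm : Tendsto (fun k : ℕ => k / N + 1) atTop atTop :=
    (tendsto_add_atTop_nat 1).comp (Nat.tendsto_div_const_atTop hN.ne')
  have hroot := ((h.comp hm).rpow (tendsto_div_add_one_div hN) (Or.inr (by positivity)))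
  have hprod := hC'.mul hroot
  rw [one_mul] at hprod
  refine hprod.congr' ?_
  filter_upwards [eventually_gt_atTop 0] with k hk
  rw [Function.comp_apply, ← Real.rpow_mul (ha _), Real.mul_rpow hC.le (ha _)]
  congr 2
  field_simp

lemma limsup_eq_of_frequently_le_of_le_tendsto {α : Type*} {l : Filter α} [l.NeBot]
    {f g : α → ℝ} {L : ℝ} (hfreq : ∃ᶠ x in l, L ≤ f x) (hle : f ≤ᶠ[l] g)
    (hg : Tendsto g l (𝓝 L)) : limsup f l = L := by
  refine le_antisymm ?_ (le_limsup_of_frequently_le hfreq (hg.isBoundedUnder_le.mono_le hle))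
  calc limsup f l ≤ limsup g l :=
        limsup_le_limsup hle (IsCoboundedUnder.of_frequently_ge hfreq) hg.isBoundedUnder_le
    _ = L := hg.limsup_eq

end Limits

section PivotStep

variable {ι : Type*}

def PermDominated (c c' : ι → ℝ) : Prop := ∃ σ : Equiv.Perm ι, ∀ j, c j ≤ c' (σ j)

lemma PermDominated.sum_le [Fintype ι] {c c' : ι → ℝ} (h : PermDominated c c') :
    ∑ j, c j ≤ ∑ j, c' j := by
  obtain ⟨σ, hσ⟩ := h
  exact (Finset.sum_le_sum fun j _ => hσ j).trans_eq (Equiv.sum_comp σ c')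

variable [DecidableEq ι]

def pivotStep (c : ι → ℝ) (a : ι) : ι → ℝ := fun j => c j + if j = a then 0 else 2 * c a

lemma le_pivotStep {c : ι → ℝ} {a : ι} (ha : 0 ≤ c a) : c ≤ pivotStep c a := fun j => by
  unfold pivotStep; split_ifs <;> linarith

lemma pivotStep_nonneg {c : ι → ℝ} (hc : 0 ≤ c) (a : ι) : 0 ≤ pivotStep c a :=
  hc.trans (le_pivotStep (hc a))

lemma pivotStep_le_pivotStep_comp {σ : Equiv.Perm ι} {c c' : ι → ℝ}
    (h : ∀ j, c j ≤ c' (σ j)) (a j : ι) : pivotStep c a j ≤ pivotStep c' (σ a) (σ j) := by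
  have := h a; have := h j
  simp only [pivotStep, σ.apply_eq_iff_eq]
  split_ifs <;> linarith

lemma pivotStep_le_pivotStep_swap {c : ι → ℝ} {a b : ι} (hab : c b ≤ c a) (j : ι) :
    pivotStep c b j ≤ pivotStep c a (Equiv.swap a b j) := by
  rcases eq_or_ne a b with rfl | hne
  · simp
  rcases eq_or_ne j a with rfl | hja
  · simp only [Equiv.swap_apply_left, pivotStep, if_neg hne, if_neg hne.symm]
    linarith
  rcases eq_or_ne j b with rfl | hjb
  · simp only [Equiv.swap_apply_right, pivotStep, if_pos]
    linarith
  · simp only [Equiv.swap_apply_of_ne_of_ne hja hjb, pivotStep, if_neg hja, if_neg hjb]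
    linarith

lemma PermDominated.pivotStep {c c' : ι → ℝ} {p : ι} (h : PermDominated c c')
    (hp : ∀ j, c' j ≤ c' p) (a : ι) : PermDominated (pivotStep c a) (pivotStep c' p) := by
  obtain ⟨σ, hσ⟩ := h
  exact ⟨σ.trans (Equiv.swap p (σ a)), fun j =>
    (pivotStep_le_pivotStep_comp hσ a j).trans (pivotStep_le_pivotStep_swap (hp (σ a)) (σ j))⟩

end PivotStep

section WordProduct

variable {N : ℕ}

def wordProd (w : List (Fin N)) : Matrix (Fin N) (Fin N) ℝ :=
  (w.map fun a : Fin N => Amat N a).prod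

@[simp] lemma wordProd_nil : wordProd ([] : List (Fin N)) = 1 := rfl

@[simp] lemma wordProd_cons (a : Fin N) (w : List (Fin N)) :
    wordProd (a :: w) = Amat N a * wordProd w := List.prod_cons

lemma vecMul_Amat (c : Fin N → ℝ) (a : Fin N) : c ᵥ* Amat N a = pivotStep c a := by
  funext j
  by_cases hj : j = a <;>
    simp [vecMul, dotProduct, Amat, pivotStep, Fin.val_inj, mul_add, Finset.sum_add_distrib, hj,
      mul_comm]

lemma vecMul_wordProd (w : List (Fin N)) (c : Fin N → ℝ) :
    c ᵥ* wordProd w = w.foldl pivotStep c := by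
  induction w generalizing c with
  | nil => simp
  | cons a w ih => rw [wordProd_cons, ← vecMul_vecMul, vecMul_Amat, ih]; rfl

lemma Amat_nonneg (k : ℕ) (i j : Fin N) : 0 ≤ Amat N k i j := by
  unfold Amat; split_ifs <;> norm_num

lemma wordProd_nonneg (w : List (Fin N)) (i j : Fin N) :
    0 ≤ wordProd w i j := by
  induction w generalizing i with
  | nil => by_cases h : i = j <;> simp [one_apply, h]
  | cons a w ih =>
    rw [wordProd_cons, mul_apply]
    exact Finset.sum_nonneg fun l _ => mul_nonneg (Amat_nonneg _ _ _) (ih l)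

end WordProduct

section Cyclic

open Fin.CommRing

variable {N : ℕ} [NeZero N]

def CyclicAntitoneFrom (c : Fin N → ℝ) (p : Fin N) : Prop :=
  ∀ i : ℕ, i + 1 < N → c (p + ((i + 1 : ℕ) : Fin N)) ≤ c (p + (i : Fin N))

lemma CyclicAntitoneFrom.le_apply {c : Fin N → ℝ} {p : Fin N} (h : CyclicAntitoneFrom c p)
    (j : Fin N) : c j ≤ c p := by
  have hchain (i : ℕ) (hi : i < N) : c (p + (i : Fin N)) ≤ c p := by
    induction i with
    | zero => simp
    | succ i ih => exact (h i hi).trans (ih (by omega))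
  simpa using hchain (j - p).val (j - p).isLt

lemma CyclicAntitoneFrom.pivotStep {c : Fin N → ℝ} {p : Fin N} (hc : 0 ≤ c)
    (h : CyclicAntitoneFrom c p) : CyclicAntitoneFrom (pivotStep c p) (p + 1) := by
  intro i hi
  have hshift_ne (s : ℕ) (hs0 : 0 < s) (hsN : s < N) : p + (s : Fin N) ≠ p := by
    simpa [Fin.natCast_eq_zero] using fun hdvd => absurd (Nat.le_of_dvd hs0 hdvd) (by omega)
  have hidx₁ : p + 1 + ((i + 1 : ℕ) : Fin N) = p + ((i + 2 : ℕ) : Fin N) := by push_cast; ring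
  have hidx₂ : p + 1 + (i : Fin N) = p + ((i + 1 : ℕ) : Fin N) := by push_cast; ring
  rw [hidx₁, hidx₂]
  simp only [_root_.pivotStep, if_neg (hshift_ne (i + 1) (by omega) hi)]
  rcases (Nat.succ_le_of_lt hi).lt_or_eq with hinner | hlast
  · rw [if_neg (hshift_ne (i + 2) (by omega) hinner)]
    linarith [h (i + 1) hinner]
  -- the last index wraps around to the pivot `p` itself
  · have hwrap : p + ((i + 2 : ℕ) : Fin N) = p := by
      rw [Fin.natCast_eq_zero.mpr ⟨1, by omega⟩, add_zero]
    have h1 : 0 ≤ c (p + ((i + 1 : ℕ) : Fin N)) := hc _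
    have h2 : 0 ≤ c p := hc p
    rw [hwrap, if_pos rfl]
    linarith

def cyclicState : ℕ → Fin N → ℝ
  | 0 => 1
  | t + 1 => pivotStep (cyclicState t) (t : Fin N)

lemma cyclicState_nonneg (t : ℕ) : 0 ≤ cyclicState (N := N) t := by
  induction t with
  | zero => exact zero_le_one
  | succ t ih => exact pivotStep_nonneg ih _

lemma cyclicState_mono : Monotone (cyclicState (N := N)) :=
  monotone_nat_of_le_succ fun t => le_pivotStep (cyclicState_nonneg t _)

lemma cyclicAntitoneFrom_cyclicState (t : ℕ) :
    CyclicAntitoneFrom (cyclicState (N := N) t) (t : Fin N) := by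
  induction t with
  | zero => intro i _; simp [cyclicState]
  | succ t ih =>
    rw [Nat.cast_succ]
    exact ih.pivotStep (cyclicState_nonneg t)

lemma permDominated_foldl_pivotStep (w : List (Fin N)) {t : ℕ} {c : Fin N → ℝ}
    (h : PermDominated c (cyclicState t)) :
    PermDominated (w.foldl pivotStep c) (cyclicState (t + w.length)) := by
  induction w generalizing t c with
  | nil => simpa using h
  | cons a w ih =>
    rw [List.foldl_cons, List.length_cons, ← add_assoc, Nat.add_right_comm]
    exact ih (t := t + 1) (h.pivotStep (cyclicAntitoneFrom_cyclicState t).le_apply a)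

end Cyclic

section OrderedProduct

open Fin.CommRing

def orderedProd (N : ℕ) : Matrix (Fin N) (Fin N) ℝ := ((List.range N).map (Amat N)).prod

def cyclicWord (N t : ℕ) [NeZero N] : List (Fin N) := (List.range t).map Nat.cast

variable {N : ℕ} [NeZero N]

lemma foldl_cyclicWord (t : ℕ) : (cyclicWord N t).foldl pivotStep 1 = cyclicState t := by
  induction t with
  | zero => rfl
  | succ t ih =>
    rw [cyclicWord, List.range_succ, List.map_append, List.foldl_append, ← cyclicWord, ih]
    rfl

lemma wordProd_cyclicWord_mul (m : ℕ) : wordProd (cyclicWord N (m * N)) = orderedProd N ^ m := by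
  induction m with
  | zero => simp [cyclicWord]
  | succ m ih =>
    have hperiod (i : ℕ) (hi : i ∈ List.range N) :
        Amat N (((m * N + i : ℕ) : Fin N) : ℕ) = Amat N i := by
      rw [Nat.cast_add, Nat.cast_mul, Fin.natCast_self, mul_zero, zero_add,
        Fin.val_cast_of_lt (List.mem_range.mp hi)]
    rw [add_one_mul, cyclicWord, List.range_add, List.map_append, ← cyclicWord, wordProd,
      List.map_append, List.prod_append, ← wordProd, ih, pow_succ, List.map_map, List.map_map]
    exact congrArg _ (congrArg List.prod (List.map_congr_left hperiod))

lemma entrySum_wordProd_le (w : List (Fin N)) :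
    entrySum (wordProd w) ≤ entrySum (orderedProd N ^ (w.length / N + 1)) := by
  have hlen : w.length ≤ (w.length / N + 1) * N := by
    rw [add_one_mul]; exact (Nat.lt_div_mul_add (Nat.pos_of_neZero N)).le
  rw [entrySum_eq_sum_one_vecMul, entrySum_eq_sum_one_vecMul, ← wordProd_cyclicWord_mul,
    vecMul_wordProd, vecMul_wordProd, foldl_cyclicWord]
  calc ∑ j, w.foldl pivotStep 1 j ≤ ∑ j, cyclicState (0 + w.length) j :=
        (permDominated_foldl_pivotStep w (t := 0) ⟨1, fun _ => le_rfl⟩).sum_le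
    _ ≤ _ := Finset.sum_le_sum fun j _ => cyclicState_mono (by omega) j

lemma specRad_wordProd_le (w : List (Fin N)) :
    specRad (wordProd w) ≤ N * ‖orderedProd N ^ (w.length / N + 1)‖ :=
  calc specRad (wordProd w) ≤ ‖wordProd w‖ := specRad_le_norm _
    _ ≤ entrySum (wordProd w) := norm_le_entrySum (wordProd_nonneg w)
    _ ≤ entrySum (orderedProd N ^ (w.length / N + 1)) := entrySum_wordProd_le w
    _ ≤ N * ‖orderedProd N ^ (w.length / N + 1)‖ := by
        simpa using entrySum_le_card_mul_norm (orderedProd N ^ (w.length / N + 1))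

lemma rhoK_le_norm_orderedProd_pow (k : ℕ) :
    rhoK (fun j : Fin N => Amat N j) k
      ≤ (N * ‖orderedProd N ^ (k / N + 1)‖) ^ (1 / k : ℝ) := by
  refine ciSup_le fun f => ?_
  have hprod : (List.ofFn fun i => Amat N (f i)).prod = wordProd (List.ofFn f) := by
    rw [wordProd, List.map_ofFn]; rfl
  rw [hprod]
  exact Real.rpow_le_rpow (specRad_nonneg _)
    (by simpa using specRad_wordProd_le (List.ofFn f)) (by positivity)

lemma specRad_rpow_le_rhoK {m : ℕ} (hm : 0 < m) :
    specRad (orderedProd N) ^ (1 / N : ℝ) ≤ rhoK (fun j : Fin N => Amat N j) (m * N) := by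
  have hr := specRad_nonneg (orderedProd N)
  have hword : (List.ofFn fun i : Fin (m * N) => Amat N ((i : ℕ) : Fin N)).prod
      = orderedProd N ^ m := by
    rw [← wordProd_cyclicWord_mul, wordProd, cyclicWord, List.map_map, List.ofFn_eq_map,
      ← List.map_coe_finRange_eq_range, List.map_map]
    rfl
  calc specRad (orderedProd N) ^ (1 / N : ℝ)
      = (specRad (orderedProd N) ^ m) ^ (1 / (m * N : ℕ) : ℝ) := by
        rw [← Real.rpow_natCast, ← Real.rpow_mul hr]
        congr 1
        push_cast
        field_simp
    _ ≤ specRad (orderedProd N ^ m) ^ (1 / (m * N : ℕ) : ℝ) :=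
        Real.rpow_le_rpow (pow_nonneg hr m) (specRad_pow_le _ m) (by positivity)
    _ ≤ rhoK (fun j : Fin N => Amat N j) (m * N) := by
        rw [← hword, rhoK]
        exact le_ciSup (f := fun f : Fin (m * N) → Fin N =>
          specRad ((List.ofFn fun i => Amat N (f i)).prod) ^ (1 / (m * N : ℕ) : ℝ))
          (Set.finite_range _).bddAbove (fun i => ((i : ℕ) : Fin N))

end OrderedProduct

theorem stmt_19 (N : ℕ) (hN : 0 < N) :
    Filter.limsup (rhoK (fun j : Fin N => Amat N (j : ℕ))) Filter.atTop
      = specRad (((List.range N).map (Amat N)).prod) ^ ((1 : ℝ) / (N : ℝ)) := by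
  have : NeZero N := ⟨hN.ne'⟩
  have hupper := tendsto_const_mul_div_add_one_rpow_one_div (fun m => norm_nonneg _)
    (Nat.cast_pos.mpr hN) (tendsto_norm_pow_rpow_specRad (orderedProd N)) hN
  have hlower : ∃ᶠ k in atTop,
      specRad (orderedProd N) ^ (1 / N : ℝ) ≤ rhoK (fun j : Fin N => Amat N j) k :=
    frequently_atTop.mpr fun k => ⟨(k + 1) * N,
      k.le_succ.trans (Nat.le_mul_of_pos_right _ hN), specRad_rpow_le_rhoK k.succ_pos⟩
  exact limsup_eq_of_frequently_le_of_le_tendsto hlower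
    (.of_forall rhoK_le_norm_orderedProd_pow) hupper
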